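/- arXiv:2504.01717 — 6 statements merged into one kernel-verified Lean document; each statement's English description precedes it below -/
import Mathlib

section
/- Let q = r² with r ≡ 3 (mod 4) an odd prime power, θ a primitive element of F_q, l an even divisor of r−1, and for 0 ≤ i ≤ l−1 let N_i = { x ∈ F_q^* : x^{r+1} = θ^{i(q−1)/l} }. If i is odd, then N_i ∩ F_r^* = ∅; if i is even, then N_i ∩ F_r^* = { θ^{(i/2)·(q−1)/l}, θ^{(i/2 + l/2)·(q−1)/l} }, a set of exactly two elements. -/
theorem stmt5 {F : Type*} [Field F] [Fintype F] (r l : ℕ)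
    (hr : IsPrimePow r) (hr3 : r % 4 = 3) (hq : Fintype.card F = r ^ 2)
    (θ : Fˣ) (hθ : ∀ x : Fˣ, x ∈ Subgroup.zpowers θ)
    (hl : l ∣ r - 1) (hleven : Even l) (hl0 : 0 < l)
    (i : ℕ) (hi : i ≤ l - 1) :
    (Odd i → {x : Fˣ | x ^ (r + 1) = θ ^ (i * ((r ^ 2 - 1) / l))} ∩
        ((Subgroup.zpowers (θ ^ (r + 1)) : Subgroup Fˣ) : Set Fˣ) = ∅) ∧
    (Even i → {x : Fˣ | x ^ (r + 1) = θ ^ (i * ((r ^ 2 - 1) / l))} ∩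
        ((Subgroup.zpowers (θ ^ (r + 1)) : Subgroup Fˣ) : Set Fˣ) =
        {θ ^ ((i / 2) * ((r ^ 2 - 1) / l)), θ ^ ((i / 2 + l / 2) * ((r ^ 2 - 1) / l))} ∧
      θ ^ ((i / 2) * ((r ^ 2 - 1) / l)) ≠ θ ^ ((i / 2 + l / 2) * ((r ^ 2 - 1) / l))) := by
  have hr1 : 3 ≤ r := by omega
  obtain ⟨m, hm⟩ := hl
  obtain ⟨d, hd⟩ := hleven
  have hd' : l = 2 * d := by omega
  have hrm : r = l * m + 1 := by omega
  have hre : r = 2 * (d * m) + 1 := by rw [hrm, hd']; ring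
  have heodd : Odd (d * m) := by
    rcases Nat.even_or_odd (d * m) with h | h
    · obtain ⟨w, hw⟩ := h; omega
    · exact h
  have hmodd : Odd m := (Nat.odd_mul.mp heodd).2
  have hdodd : Odd d := (Nat.odd_mul.mp heodd).1
  have hm0 : 0 < m := hmodd.pos
  have hd0 : 0 < d := hdodd.pos
  have hsq : r ^ 2 - 1 = l * (m * (r + 1)) := by
    have h : r ^ 2 = l * (m * (r + 1)) + 1 := by rw [hrm]; ring
    omega
  have hE : (r ^ 2 - 1) / l = m * (r + 1) := by
    rw [hsq, Nat.mul_div_cancel_left _ hl0]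
  have h1r2 : 1 ≤ r ^ 2 := Nat.one_le_pow 2 r (by omega)
  have hcast : ((r ^ 2 - 1 : ℕ) : ℤ) = (r : ℤ) ^ 2 - 1 := by
    rw [Nat.cast_sub h1r2]; push_cast; ring
  have ho : orderOf θ = r ^ 2 - 1 := by
    rw [orderOf_eq_card_of_forall_mem_zpowers hθ, Nat.card_units,
      Nat.card_eq_fintype_card, hq]
  have hiff : ∀ a b : ℕ, θ ^ a = θ ^ b ↔ ((r : ℤ) ^ 2 - 1) ∣ (b : ℤ) - (a : ℤ) := by
    intro a b
    rw [pow_eq_pow_iff_modEq, ho, Nat.modEq_iff_dvd, hcast]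
  have hRZ : (r : ℤ) = 2 * (d : ℤ) * (m : ℤ) + 1 := by push_cast [hre]; ring
  rw [hE]
  constructor
  · -- odd case
    intro hiodd
    rw [Set.eq_empty_iff_forall_notMem]
    rintro x ⟨hx1, hx2⟩
    rw [Set.mem_setOf_eq] at hx1
    obtain ⟨k, hk⟩ := (Submonoid.mem_powers_iff _ _).mp
      (mem_powers_iff_mem_zpowers.mpr hx2)
    rw [← hk, ← pow_mul, ← pow_mul] at hx1
    obtain ⟨c, hc⟩ := (hiff _ _).mp hx1
    push_cast at hc
    rw [hRZ] at hc
    have hne : (2 * (d : ℤ) * m + 2) ≠ 0 := by positivity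
    have h2 : (i : ℤ) * m - (2 * (d : ℤ) * m + 2) * k = 2 * d * m * c := by
      apply mul_right_cancel₀ hne
      linear_combination hc
    have hodd : Odd ((i : ℤ) * (m : ℤ)) := by exact_mod_cast hiodd.mul hmodd
    have heven : Even ((i : ℤ) * (m : ℤ)) :=
      ⟨d * m * c + d * m * k + k, by linarith⟩
    exact (Int.not_odd_iff_even.mpr heven) hodd
  · -- even case
    intro hieven
    obtain ⟨j, rfl⟩ := hieven
    simp only [show (j + j) / 2 = j from by omega, show l / 2 = d from by omega]
    constructor
    · ext x
      simp only [Set.mem_inter_iff, Set.mem_setOf_eq, SetLike.mem_coe,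
        Set.mem_insert_iff, Set.mem_singleton_iff]
      constructor
      · rintro ⟨hx1, hx2⟩
        obtain ⟨k, hk⟩ := (Submonoid.mem_powers_iff _ _).mp
          (mem_powers_iff_mem_zpowers.mpr hx2)
        rw [← hk, ← pow_mul, ← pow_mul] at hx1
        obtain ⟨c, hc⟩ := (hiff _ _).mp hx1
        push_cast at hc
        rw [hRZ] at hc
        have hne : (2 * (d : ℤ) * m + 2) ≠ 0 := by positivity
        have h2 : 2 * (j : ℤ) * m - (2 * (d : ℤ) * m + 2) * k = 2 * d * m * c := by
          apply mul_right_cancel₀ hne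
          linear_combination hc
        have hk3 : (k : ℤ) = j * m + d * m * (-(c + k)) := by
          apply mul_left_cancel₀ (show (2 : ℤ) ≠ 0 by norm_num)
          linear_combination -h2
        rcases Int.even_or_odd (-(c + k)) with ⟨c2, hc2⟩ | ⟨c2, hc2⟩
        · left
          rw [← hk, ← pow_mul, hiff]
          refine ⟨-c2, ?_⟩
          rw [hc2] at hk3
          push_cast
          rw [hRZ]
          linear_combination (-(2 * (d : ℤ) * m + 2)) * hk3
        · right
          rw [← hk, ← pow_mul, hiff]
          refine ⟨-c2, ?_⟩
          rw [hc2] at hk3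
          push_cast
          rw [hRZ]
          linear_combination (-(2 * (d : ℤ) * m + 2)) * hk3
      · rintro (rfl | rfl)
        · refine ⟨?_, ?_⟩
          · rw [← pow_mul, hiff]
            refine ⟨-((j : ℤ) * m), ?_⟩
            push_cast; ring
          · exact Subgroup.mem_zpowers_iff.mpr
              ⟨((j * m : ℕ) : ℤ), by rw [zpow_natCast, ← pow_mul]; congr 1; ring⟩
        · refine ⟨?_, ?_⟩
          · rw [← pow_mul, hiff]
            refine ⟨-((j : ℤ) * m) - ((d : ℤ) * m + 1), ?_⟩
            push_cast
            rw [hRZ]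
            ring
          · exact Subgroup.mem_zpowers_iff.mpr
              ⟨(((j + d) * m : ℕ) : ℤ), by rw [zpow_natCast, ← pow_mul]; congr 1; ring⟩
    · intro hcon
      obtain ⟨c, hc⟩ := (hiff _ _).mp hcon
      push_cast at hc
      rw [hRZ] at hc
      have h1 : (0 : ℤ) < (d : ℤ) := by exact_mod_cast hd0
      have h2 : (0 : ℤ) < (m : ℤ) := by exact_mod_cast hm0
      have hXpos : 0 < 2 * ((d : ℤ) * m * ((d : ℤ) * m + 1)) := by nlinarith
      have h12 : (1 : ℤ) = 2 * c := by
        apply mul_left_cancel₀ (ne_of_gt hXpos)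
        linear_combination hc
      omega
end

section
/- Let q = r² with r an odd prime power, l | (r−1), α = θ^{(q−1)/l} with θ a primitive element of F_q, and N_i = {x ∈ F_q^* : x^{r+1} = α^i} for 0 ≤ i ≤ l−1. Then for every a ∈ N_i, δ_{N_i}(a) := ∏_{a′∈N_i, a′≠a}(a − a′) = (r+1)·a^r (where r+1 denotes the image of the integer r+1 in F_q). -/
open Polynomial

theorem stmt7 {F : Type*} [Field F] [Fintype F] [DecidableEq F] (r l : ℕ)
    (hr : IsPrimePow r) (hodd : Odd r) (hq : Fintype.card F = r ^ 2)
    (θ : Fˣ) (hθ : ∀ x : Fˣ, x ∈ Subgroup.zpowers θ)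
    (hl : l ∣ r - 1) (hl0 : 0 < l) (i : ℕ) (hi : i ≤ l - 1)
    (a : F)
    (ha : a ∈ Finset.univ.filter
      (fun x : F => x ^ (r + 1) = ((θ : F) ^ ((r ^ 2 - 1) / l)) ^ i)) :
    ∏ a' ∈ (Finset.univ.filter
        (fun x : F => x ^ (r + 1) = ((θ : F) ^ ((r ^ 2 - 1) / l)) ^ i)).erase a,
      (a - a') = ((r + 1 : ℕ) : F) * a ^ r := by
  classical
  simp only [Finset.mem_filter, Finset.mem_univ, true_and] at ha
  set c : F := ((θ : F) ^ ((r ^ 2 - 1) / l)) ^ i with hc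
  set n := r + 1 with hn
  have hr1 : 1 < r := hr.one_lt
  have hfact : r ^ 2 - 1 = n * (r - 1) := by
    obtain ⟨m, rfl⟩ : ∃ m, r = m + 1 := ⟨r - 1, by omega⟩
    have h2 : (m + 1) ^ 2 = (m + 1 + 1) * m + 1 := by ring
    simp only [hn, Nat.add_sub_cancel, h2]
  have hcard : Fintype.card Fˣ = r ^ 2 - 1 := by
    rw [Fintype.card_units, hq]
  have horder : orderOf (θ : F) = r ^ 2 - 1 := by
    rw [orderOf_units, orderOf_eq_card_of_forall_mem_zpowers hθ, Nat.card_eq_fintype_card, hcard]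
  have hpos : 0 < r ^ 2 - 1 := Nat.sub_pos_of_lt (by nlinarith)
  have hζ : IsPrimitiveRoot ((θ : F) ^ (r - 1)) n := by
    have h := IsPrimitiveRoot.orderOf (θ : F)
    rw [horder] at h
    exact h.pow hpos (by rw [hfact, mul_comm])
  -- c is nonzero
  have hθ0 : (θ : F) ≠ 0 := Units.ne_zero θ
  have hc0 : c ≠ 0 := pow_ne_zero _ (pow_ne_zero _ hθ0)
  have hn0 : 0 < n := by omega
  -- the multiset of n-th roots of c
  set M : Multiset F := nthRoots n c with hM
  have hanM : a ∈ M := by rw [hM, mem_nthRoots hn0]; exact ha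
  have hnodup : M.Nodup := hζ.nthRoots_nodup hc0
  have hMcard : Multiset.card M = n := by
    rw [hM, hζ.card_nthRoots, if_pos ⟨a, ha⟩]
  -- the filter set is M.toFinset
  have hset : (Finset.univ.filter (fun x : F => x ^ (r + 1) = c)) = M.toFinset := by
    ext x
    simp [hM, mem_nthRoots hn0, hn]
  -- the polynomial
  have hmonic : (X ^ n - C c : F[X]).Monic := monic_X_pow_sub_C c hn0.ne'
  have hroots : (X ^ n - C c : F[X]).roots = M := rfl
  have hprod : (M.map fun b => X - C b).prod = X ^ n - C c := by
    have := prod_multiset_X_sub_C_of_monic_of_roots_card_eq hmonic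
      (by rw [hroots, hMcard, natDegree_X_pow_sub_C])
    rw [hroots] at this
    exact this
  -- evaluate the derivative at a, two ways
  have key := eval_multiset_prod_X_sub_C_derivative hanM
  rw [hprod] at key
  have hder : derivative (X ^ n - C c : F[X]) = C (n : F) * X ^ r := by
    rw [derivative_sub, derivative_C, sub_zero, derivative_X_pow, hn,
      Nat.add_sub_cancel]
  rw [hder] at key
  simp only [eval_mul, eval_C, eval_pow, eval_X] at key
  -- convert the finset product to the multiset product
  have hval : ((Finset.univ.filter (fun x : F => x ^ (r + 1) = c)).erase a).val
      = M.erase a := by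
    rw [Finset.erase_val, hset, Multiset.toFinset_val, hnodup.dedup]
  rw [Finset.prod, hval, ← key]
end

section
/- Let q be a prime power, F_q^* = ⟨θ⟩, and u, v, w divisors of q−1. Set α = θ^u, β = θ^v, γ = θ^w. Let A_i = β^i⟨α⟩ and B_j = γ^j⟨β⟩ be cosets. If A_i ∩ B_j ≠ ∅ for some integers i, j, then gcd(u,v)/gcd(u,v,w) divides j. -/
theorem stmt14 {F : Type*} [Field F] [Fintype F] (u v w i j : ℕ)
    (θ : Fˣ) (hθ : ∀ x : Fˣ, x ∈ Subgroup.zpowers θ)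
    (hu : u ∣ Fintype.card F - 1) (hv : v ∣ Fintype.card F - 1)
    (hw : w ∣ Fintype.card F - 1)
    (hne : ∃ k₁ k₂ : ℕ, (θ : F) ^ (v * i + u * k₁) = (θ : F) ^ (w * j + v * k₂)) :
    Nat.gcd u v / Nat.gcd (Nat.gcd u v) w ∣ j := by
  obtain ⟨k₁, k₂, h⟩ := hne
  -- lift the equality to Fˣ
  have hunits : θ ^ (v * i + u * k₁) = θ ^ (w * j + v * k₂) := by
    apply Units.ext
    simpa [Units.val_pow_eq_pow_val] using h
  have hord : orderOf θ = Fintype.card F - 1 := by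
    rw [orderOf_eq_card_of_forall_mem_zpowers hθ, Nat.card_units, Nat.card_eq_fintype_card]
  have hmod : (v * i + u * k₁) ≡ (w * j + v * k₂) [MOD Fintype.card F - 1] := by
    rw [← hord]
    exact (pow_eq_pow_iff_modEq.mp hunits)
  have hZ : ((Fintype.card F - 1 : ℕ) : ℤ) ∣
      ((w * j + v * k₂ : ℕ) : ℤ) - ((v * i + u * k₁ : ℕ) : ℤ) := hmod.dvd
  obtain ⟨m, hm⟩ := hZ
  set d := Nat.gcd u v with hd
  have hdu : (d : ℤ) ∣ (u : ℤ) := Int.natCast_dvd_natCast.mpr (Nat.gcd_dvd_left u v)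
  have hdv : (d : ℤ) ∣ (v : ℤ) := Int.natCast_dvd_natCast.mpr (Nat.gcd_dvd_right u v)
  have hdq : (d : ℤ) ∣ ((Fintype.card F - 1 : ℕ) : ℤ) :=
    Int.natCast_dvd_natCast.mpr ((Nat.gcd_dvd_left u v).trans hu)
  have hdwj : (d : ℤ) ∣ ((w * j : ℕ) : ℤ) := by
    have : ((w * j : ℕ) : ℤ) = ((Fintype.card F - 1 : ℕ) : ℤ) * m
        + (v : ℤ) * i + (u : ℤ) * k₁ - (v : ℤ) * k₂ := by
      push_cast at hm ⊢
      linarith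
    rw [this]
    exact dvd_sub (dvd_add (dvd_add (hdq.mul_right m) (hdv.mul_right i))
      (hdu.mul_right k₁)) (hdv.mul_right k₂)
  have hdwjN : d ∣ w * j := Int.natCast_dvd_natCast.mp hdwj
  set g := Nat.gcd d w with hg
  have hupos : 0 < u := Nat.pos_of_dvd_of_pos hu (Nat.sub_pos_of_lt Fintype.one_lt_card)
  have hdpos : 0 < d := Nat.gcd_pos_of_pos_left v hupos
  have hgpos : 0 < g := Nat.gcd_pos_of_pos_left w hdpos
  have hco : Nat.Coprime (d / g) (w / g) := Nat.coprime_div_gcd_div_gcd hgpos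
  have hdvd : d / g ∣ (w / g) * j := by
    have h1 : g * (d / g) ∣ g * ((w / g) * j) := by
      rw [Nat.mul_div_cancel' (Nat.gcd_dvd_left d w), ← mul_assoc,
        Nat.mul_div_cancel' (Nat.gcd_dvd_right d w)]
      exact hdwjN
    exact (Nat.mul_dvd_mul_iff_left hgpos).mp h1
  exact hco.dvd_of_dvd_mul_left hdvd
end

section
/- Let q = r² with r an odd prime power, F_q^* = ⟨θ⟩, and let u, v be even divisors of q−1 with 2u | (r+1)v. Suppose 2^l | u and v ≡ 2^l (mod 2^{l+1}) for some l ≥ 2. Set α = θ^u, β = θ^v, γ = θ^{v/2}. Let A = ⋃_{i=0}^{s−1} β^i⟨α⟩ and C = ⋃_{k=0}^{s′−1} γ^{2k+1}⟨α⟩ for integers 0 ≤ s, s′ ≤ u/gcd(u,v). Then A ∩ C = ∅. -/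
theorem stmt15 {F : Type*} [Field F] [Fintype F] [DecidableEq F] (r u v l s s' : ℕ)
    (hr : IsPrimePow r) (hodd : Odd r) (hq : Fintype.card F = r ^ 2)
    (θ : Fˣ) (hθ : ∀ x : Fˣ, x ∈ Subgroup.zpowers θ)
    (hu : u ∣ r ^ 2 - 1) (hv : v ∣ r ^ 2 - 1)
    (hueven : Even u) (hveven : Even v)
    (h2u : 2 * u ∣ (r + 1) * v)
    (hl : 2 ≤ l) (hlu : 2 ^ l ∣ u) (hlv : v % 2 ^ (l + 1) = 2 ^ l)
    (hs : s ≤ u / Nat.gcd u v) (hs' : s' ≤ u / Nat.gcd u v) :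
    Disjoint
      ((Finset.range s).biUnion (fun i => (Finset.range ((r ^ 2 - 1) / u)).image
        (fun k => (θ : F) ^ (v * i + u * k))))
      ((Finset.range s').biUnion (fun k => (Finset.range ((r ^ 2 - 1) / u)).image
        (fun m => (θ : F) ^ ((v / 2) * (2 * k + 1) + u * m)))) := by
  rw [Finset.disjoint_left]
  rintro x hx hx'
  simp only [Finset.mem_biUnion, Finset.mem_image, Finset.mem_range] at hx hx'
  obtain ⟨i, hi, a, ha, rfl⟩ := hx
  obtain ⟨j, hj, b, hb, heq⟩ := hx'
  -- order of θ
  have hcard : Fintype.card Fˣ = r ^ 2 - 1 := by rw [Fintype.card_units, hq]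
  have horder : orderOf θ = r ^ 2 - 1 := by
    rw [orderOf_eq_card_of_forall_mem_zpowers hθ, Nat.card_eq_fintype_card, hcard]
  have hunit : θ ^ (v / 2 * (2 * j + 1) + u * b) = θ ^ (v * i + u * a) :=
    Units.ext (by simpa using heq)
  have hmod : (v / 2 * (2 * j + 1) + u * b) ≡ (v * i + u * a) [MOD 2 ^ l] := by
    have h0 := (pow_eq_pow_iff_modEq).mp hunit
    rw [horder] at h0
    exact h0.of_dvd (dvd_trans hlu hu)
  -- structure of v
  set t := v / 2 ^ (l + 1) with ht
  have hvdecomp : v = 2 ^ (l + 1) * t + 2 ^ l := by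
    have h9 := Nat.div_add_mod v (2 ^ (l + 1))
    rw [← ht] at h9
    omega
  have h2l : 2 ^ l = 2 * 2 ^ (l - 1) := by
    rw [← pow_succ']
    congr 1
    omega
  have hvl : v = 2 ^ l * (2 * t + 1) := by
    rw [hvdecomp, pow_succ]
    ring
  have hvhalf : v / 2 = 2 ^ (l - 1) * (2 * t + 1) := by
    have : v = 2 * (2 ^ (l - 1) * (2 * t + 1)) := by
      rw [hvl, h2l]; ring
    omega
  obtain ⟨u', hu'⟩ := hlu
  -- LHS exponent divisible by 2^l
  have hA : 2 ^ l ∣ v * i + u * a :=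
    dvd_add ((Dvd.intro _ hvl.symm).mul_right i) ((Dvd.intro _ hu'.symm).mul_right a)
  have hB : 2 ^ l ∣ v / 2 * (2 * j + 1) + u * b := by
    have h1 : (v * i + u * a) ≡ 0 [MOD 2 ^ l] := (Nat.modEq_zero_iff_dvd).mpr hA
    exact (Nat.modEq_zero_iff_dvd).mp (hmod.trans h1)
  rw [hvhalf, hu'] at hB
  have h5 : 2 ^ l ∣ 2 ^ l * u' * b := ⟨u' * b, by ring⟩
  have h6 : 2 ^ l ∣ 2 ^ (l - 1) * ((2 * t + 1) * (2 * j + 1)) := by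
    have := Nat.dvd_sub hB h5
    simpa [mul_assoc, Nat.add_sub_cancel] using this
  rw [h2l, mul_comm 2 (2 ^ (l - 1))] at h6
  have h7 : 2 ∣ (2 * t + 1) * (2 * j + 1) :=
    (mul_dvd_mul_iff_left (a := (2 : ℕ) ^ (l - 1)) (by positivity)).mp h6
  have h8 : Odd ((2 * t + 1) * (2 * j + 1)) :=
    (odd_two_mul_add_one t).mul (odd_two_mul_add_one j)
  rw [Nat.odd_iff] at h8
  omega
end

section
/- Let q = r² with r an odd prime power, F_q^* = ⟨θ⟩, and let u, v be divisors of q−1 with v | (r−1)u. Set α = θ^u, β = θ^v. Then for any integers i, j and any t ≥ 0, the element ∏_{l=0}^{t−1} ((β^i α^j)^{(q−1)/v} − α^{l(q−1)/v}) lies in F_r (the subfield of F_q with r elements); in particular it is a square in F_q. -/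
theorem stmt17 {F : Type*} [Field F] [Fintype F] (r u v : ℕ)
    (hr : IsPrimePow r) (hodd : Odd r) (hq : Fintype.card F = r ^ 2)
    (θ : Fˣ) (hθ : ∀ x : Fˣ, x ∈ Subgroup.zpowers θ)
    (hu : u ∣ r ^ 2 - 1) (hv : v ∣ r ^ 2 - 1) (hvu : v ∣ (r - 1) * u)
    (i j t : ℕ) :
    (∏ l ∈ Finset.range t,
        (((θ : F) ^ (v * i + u * j)) ^ ((r ^ 2 - 1) / v) -
          ((θ : F) ^ u) ^ (l * ((r ^ 2 - 1) / v)))) ^ r =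
      (∏ l ∈ Finset.range t,
        (((θ : F) ^ (v * i + u * j)) ^ ((r ^ 2 - 1) / v) -
          ((θ : F) ^ u) ^ (l * ((r ^ 2 - 1) / v)))) ∧
    IsSquare (∏ l ∈ Finset.range t,
        (((θ : F) ^ (v * i + u * j)) ^ ((r ^ 2 - 1) / v) -
          ((θ : F) ^ u) ^ (l * ((r ^ 2 - 1) / v)))) := by
  obtain ⟨p, k, hp, hk, hpk⟩ := hr
  have hp' : p.Prime := hp.nat_prime
  have hrpos : 0 < r := hpk ▸ pow_pos hp'.pos k
  have hr1 : 1 < r := by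
    rw [← hpk]; exact Nat.one_lt_pow (by omega) hp'.one_lt
  -- characteristic is p
  have hcard : Fintype.card F = p ^ (2 * k) := by
    rw [hq, ← hpk, ← pow_mul, mul_comm]
  haveI : CharP F (ringChar F) := ringChar.charP F
  obtain ⟨n, hrp, hcard'⟩ := FiniteField.card F (ringChar F)
  have hpr : ringChar F = p := by
    have h1 : (ringChar F) ∣ p ^ (2 * k) := by
      rw [← hcard, hcard']; exact dvd_pow_self _ n.pos.ne'
    have := (Nat.Prime.dvd_of_dvd_pow hrp h1)
    exact (Nat.prime_dvd_prime_iff_eq hrp hp').mp this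
  haveI : CharP F p := hpr ▸ ringChar.charP F
  haveI : ExpChar F p := ExpChar.prime hp'
  -- θ ^ (r^2-1) = 1
  have hθne : (θ : F) ≠ 0 := θ.ne_zero
  have hθ1 : (θ : F) ^ (r ^ 2 - 1) = 1 := by
    rw [← hq]; exact FiniteField.pow_card_sub_one_eq_one _ hθne
  -- key: for m with (r^2-1) ∣ m*(r-1), ((θ:F)^m)^r = (θ:F)^m
  have key : ∀ m : ℕ, (r ^ 2 - 1) ∣ m * (r - 1) → ((θ : F) ^ m) ^ r = (θ : F) ^ m := by
    rintro m ⟨c, hc⟩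
    have : ((θ : F) ^ m) ^ (r - 1) = 1 := by
      rw [← pow_mul, hc, pow_mul, hθ1, one_pow]
    calc ((θ : F) ^ m) ^ r = ((θ : F) ^ m) ^ (r - 1) * (θ : F) ^ m := by
          rw [← pow_succ]; congr 1; omega
      _ = (θ : F) ^ m := by rw [this, one_mul]
  set N := (r ^ 2 - 1) / v with hN
  have hvN : v * N = r ^ 2 - 1 := Nat.mul_div_cancel' hv
  obtain ⟨c, hc⟩ := hvu
  have hA : (((θ : F) ^ (v * i + u * j)) ^ N) ^ r = ((θ : F) ^ (v * i + u * j)) ^ N := by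
    have h := key ((v * i + u * j) * N) ⟨i * (r - 1) + j * c, ?_⟩
    · rw [pow_mul] at h; exact h
    have h1 : u * (r - 1) = v * c := by rw [← hc]; ring
    calc (v * i + u * j) * N * (r - 1)
        = (v * N) * (i * (r - 1)) + (u * (r - 1)) * (j * N) := by ring
      _ = (r ^ 2 - 1) * (i * (r - 1)) + (v * c) * (j * N) := by rw [hvN, h1]
      _ = (r ^ 2 - 1) * (i * (r - 1)) + (v * N) * (j * c) := by ring
      _ = (r ^ 2 - 1) * (i * (r - 1) + j * c) := by rw [hvN]; ring
  have hB : ∀ l : ℕ, (((θ : F) ^ u) ^ (l * N)) ^ r = ((θ : F) ^ u) ^ (l * N) := by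
    intro l
    have h := key (u * (l * N)) ⟨l * c, ?_⟩
    · rw [pow_mul] at h; exact h
    have h1 : u * (r - 1) = v * c := by rw [← hc]; ring
    calc u * (l * N) * (r - 1) = (u * (r - 1)) * (l * N) := by ring
      _ = (v * N) * (l * c) := by rw [h1]; ring
      _ = (r ^ 2 - 1) * (l * c) := by rw [hvN]
  -- each factor is fixed by x ↦ x^r
  have hfac : ∀ l : ℕ,
      (((θ : F) ^ (v * i + u * j)) ^ N - ((θ : F) ^ u) ^ (l * N)) ^ r =
      (((θ : F) ^ (v * i + u * j)) ^ N - ((θ : F) ^ u) ^ (l * N)) := by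
    intro l
    rw [← hpk, sub_pow_expChar_pow, hpk, hA, hB l]
  set P := ∏ l ∈ Finset.range t,
      (((θ : F) ^ (v * i + u * j)) ^ N - ((θ : F) ^ u) ^ (l * N)) with hP
  have hPr : P ^ r = P := by
    rw [hP, ← Finset.prod_pow]
    exact Finset.prod_congr rfl fun l _ => hfac l
  refine ⟨hPr, ?_⟩
  rcases eq_or_ne P 0 with h0 | h0
  · rw [h0]; exact ⟨0, by ring⟩
  obtain ⟨m, hm⟩ := hodd
  have hchar2 : ringChar F ≠ 2 := by
    rw [hpr]
    intro h
    have : p ∣ r := hpk ▸ dvd_pow_self p hk.ne'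
    rw [h] at this
    omega
  rw [FiniteField.isSquare_iff hchar2 h0]
  have hP1 : P ^ (r - 1) = 1 := by
    have h2 : P ^ (r - 1) * P = P := by
      rw [← pow_succ]
      have : r - 1 + 1 = r := by omega
      rw [this, hPr]
    field_simp at h2
    exact h2
  have hr1' : r - 1 = 2 * m := by omega
  have hexp : Fintype.card F / 2 = (r - 1) * (m + 1) := by
    rw [hq, hr1']
    have h2 : r ^ 2 = 2 * (2 * m * (m + 1)) + 1 := by rw [hm]; ring
    omega
  rw [hexp, pow_mul, hP1, one_pow]
end

section
/- Let q = r² with r an odd prime power, F_q^* = ⟨θ⟩, u an even divisor of q−1 with u | (r+1)v for an even divisor v of q−1, and let Ω = ∏_{l=0, l≠i}^{s−1} (θ^{(q−1)vi/u} − θ^{(q−1)vl/u}) for integers 0 ≤ i ≤ s−1. Then Ω^r = (−1)^{s−1} θ^{−((q−1)v/u)((s−2)i + s(s−1)/2)} · Ω. -/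
theorem stmt19 {F : Type*} [Field F] [Fintype F] [DecidableEq F] (r u v s i : ℕ)
    (hr : IsPrimePow r) (hodd : Odd r) (hq : Fintype.card F = r ^ 2)
    (θ : Fˣ) (hθ : ∀ x : Fˣ, x ∈ Subgroup.zpowers θ)
    (hu : u ∣ r ^ 2 - 1) (hv : v ∣ r ^ 2 - 1)
    (hueven : Even u) (hveven : Even v)
    (huv : u ∣ (r + 1) * v) (his : i < s)
    (hΩ : (∏ l ∈ (Finset.range s).erase i,
        ((θ : F) ^ (((r ^ 2 - 1) * v / u) * i) -
          (θ : F) ^ (((r ^ 2 - 1) * v / u) * l))) ≠ 0) :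
    (∏ l ∈ (Finset.range s).erase i,
        ((θ : F) ^ (((r ^ 2 - 1) * v / u) * i) -
          (θ : F) ^ (((r ^ 2 - 1) * v / u) * l))) ^ r =
      (-1 : F) ^ (s - 1) *
        (θ : F) ^ (-((((r ^ 2 - 1) * v / u : ℕ) : ℤ) *
          (((s : ℤ) - 2) * (i : ℤ) + ((s : ℤ) * ((s : ℤ) - 1)) / 2)) : ℤ) *
        ∏ l ∈ (Finset.range s).erase i,
          ((θ : F) ^ (((r ^ 2 - 1) * v / u) * i) -
            (θ : F) ^ (((r ^ 2 - 1) * v / u) * l)) := by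
  classical
  obtain ⟨p, k, hp, hk, hrpk⟩ := hr
  have hp' : p.Prime := hp.nat_prime
  have hr2 : 2 ≤ r := by
    rw [← hrpk]; exact hp'.two_le.trans (Nat.le_self_pow (by omega) p)
  have hr2' : 4 ≤ r ^ 2 := by nlinarith
  have hrpos : 0 < r ^ 2 - 1 := by omega
  have hupos : 0 < u := Nat.pos_of_dvd_of_pos hu hrpos
  set t : F := (θ : F) with htdef
  have ht0 : t ≠ 0 := Units.ne_zero θ
  set m : ℕ := (r ^ 2 - 1) * v / u with hm
  -- characteristic
  haveI : CharP F (ringChar F) := ringChar.charP F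
  obtain ⟨n, hchp, hcard⟩ := FiniteField.card F (ringChar F)
  have hpowq : (ringChar F) ^ (n : ℕ) = p ^ (k * 2) := by
    rw [← hcard, hq, ← hrpk, ← pow_mul]
  have hrc : ringChar F = p := by
    have h1 : ringChar F ∣ p ^ (k * 2) := hpowq ▸ dvd_pow_self _ n.pos.ne'
    exact (Nat.prime_dvd_prime_iff_eq hchp hp').mp (hchp.dvd_of_dvd_pow h1)
  haveI : Fact p.Prime := ⟨hp'⟩
  haveI : CharP F p := hrc ▸ ringChar.charP F
  have hfrob : ∀ a b : F, (a - b) ^ r = a ^ r - b ^ r := by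
    intro a b
    rw [← hrpk]
    exact sub_pow_char_pow a b k
  -- θ^(q-1) = 1
  have ht1 : t ^ (r ^ 2 - 1) = 1 := by
    have h : θ ^ Fintype.card Fˣ = 1 := pow_card_eq_one
    rw [Fintype.card_units, hq] at h
    have := congrArg (Units.val : Fˣ → F) h
    simpa using this
  obtain ⟨d, hd⟩ := hu
  obtain ⟨c, hc⟩ := huv
  have hmdv : m = d * v := by
    rw [hm, hd, mul_assoc, Nat.mul_div_cancel_left _ hupos]
  have hmr : m * (r + 1) = (r ^ 2 - 1) * c := by
    calc m * (r + 1) = d * ((r + 1) * v) := by rw [hmdv]; ring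
    _ = d * (u * c) := by rw [hc]
    _ = (r ^ 2 - 1) * c := by rw [hd]; ring
  have hkey : ∀ l : ℕ, t ^ (m * l * r) = (t ^ (m * l))⁻¹ := by
    intro l
    have h1 : t ^ (m * l * r) * t ^ (m * l) = 1 := by
      rw [← pow_add]
      have he : m * l * r + m * l = (r ^ 2 - 1) * (c * l) := by
        calc m * l * r + m * l = m * (r + 1) * l := by ring
        _ = (r ^ 2 - 1) * (c * l) := by rw [hmr]; ring
      rw [he, pow_mul, ht1, one_pow]
    exact eq_inv_of_mul_eq_one_left h1
  have key2 : ∀ a b : F, a ≠ 0 → b ≠ 0 →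
      a⁻¹ - b⁻¹ = -1 * (a⁻¹ * b⁻¹ * (a - b)) := by
    intro a b ha hb
    field_simp
    ring
  have hfac : ∀ l ∈ (Finset.range s).erase i,
      (t ^ (m * i) - t ^ (m * l)) ^ r =
        -1 * (((t ^ (m * i))⁻¹) * ((t ^ (m * l))⁻¹) * (t ^ (m * i) - t ^ (m * l))) := by
    intro l _
    rw [hfrob, ← pow_mul, ← pow_mul, hkey i, hkey l,
      key2 _ _ (pow_ne_zero _ ht0) (pow_ne_zero _ ht0)]
  rw [← Finset.prod_pow, Finset.prod_congr rfl hfac]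
  simp only [Finset.prod_mul_distrib, Finset.prod_const, Finset.prod_inv_distrib,
    Finset.prod_pow_eq_pow_sum, Finset.card_erase_of_mem (Finset.mem_range.mpr his),
    Finset.card_range]
  set S : ℕ := ∑ l ∈ (Finset.range s).erase i, l with hS
  have hsum : ∑ l ∈ (Finset.range s).erase i, m * l = m * S := by
    rw [hS, Finset.mul_sum]
  have hSi : S + i = ∑ l ∈ Finset.range s, l :=
    Finset.sum_erase_add _ _ (Finset.mem_range.mpr his)
  have hgauss : (S + i) * 2 = s * (s - 1) := by
    rw [hSi]; exact Finset.sum_range_id_mul_two s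
  have hcomb : ((t ^ (m * i))⁻¹) ^ (s - 1) * (t ^ (m * S))⁻¹ =
      t ^ (-((m : ℤ) * (((s : ℤ) - 2) * (i : ℤ) + ((s : ℤ) * ((s : ℤ) - 1)) / 2))) := by
    rw [inv_pow, ← pow_mul, ← mul_inv, ← pow_add]
    have hz : t ^ (-((m : ℤ) * (((s : ℤ) - 2) * (i : ℤ) + ((s : ℤ) * ((s : ℤ) - 1)) / 2)))
        = (t ^ ((m * i * (s - 1) + m * S : ℕ) : ℤ))⁻¹ := by
      rw [← zpow_neg]
      congr 1
      have hs1 : ((s - 1 : ℕ) : ℤ) = (s : ℤ) - 1 := by omega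
      have hg : (s : ℤ) * ((s : ℤ) - 1) = 2 * ((S : ℤ) + (i : ℤ)) := by
        have h := congrArg (Nat.cast : ℕ → ℤ) hgauss
        push_cast at h
        rw [hs1] at h
        linarith [h]
      rw [hg, Int.mul_ediv_cancel_left _ (by norm_num)]
      push_cast [hs1]
      ring
    rw [hz, zpow_natCast]
  rw [hsum, mul_assoc, ← mul_assoc (((t ^ (m*i))⁻¹) ^ (s-1)), hcomb]
  ring
end
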